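/- arXiv:0705.1576 — 3 statements merged into one kernel-verified Lean document; each statement's English description precedes it below -/
import Mathlib

section
/- Let F be a field with char F ≠ 2 and D = ℍ[F, c₁, c₂] the quaternion algebra with c₁ ≠ 0 and c₂ ≠ 0. Let g be a 2×2 matrix over D and z ∈ F. Then z·(g·X·gᴴ) = X for every Hermitian 2×2 matrix X over D (i.e. every X with Xᴴ = X) if and only if there exists t ∈ Fˣ such that g = t·I₂ and z = t⁻². -/
/-!
Testing the action on the Hermitian matrices `single i i 1` and
`single i j q + single j i (star q)` shows that `g` is diagonal, that its diagonal entries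
`a` coincide, and that `z • (a * q * star a) = q` for all `q`. Since every quaternion is normal,
`z • (a * star a) = 1` makes `z • star a` a two-sided inverse of `a`, so `a` is central; when
`2 ≠ 0` and `c₁ ≠ 0` the centre of `ℍ[F, c₁, c₂]` is `F`, so `a = t` and `z = t⁻²`.
-/

open Matrix

open Quaternion

section StarAlgebra

variable {R A : Type*} [CommSemiring R] [Ring A] [StarRing A] [Algebra R A]

theorem smul_mul_star_mul_cancel {z : R} {b : A} [IsStarNormal b]
    (hb : z • (b * star b) = 1) (x : A) : z • (x * star b) * b = x := by
  rw [smul_mul_assoc, mul_assoc, star_comm_self', ← mul_smul_comm, hb, mul_one]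

variable {n : Type*} [Fintype n] [DecidableEq n]

theorem Matrix.mul_single_mul_conjTranspose_apply (g : Matrix n n A) (i j k l : n) (q : A) :
    (g * single i j q * gᴴ) k l = g k i * q * star (g l j) := by
  simp [Matrix.mul_apply, Matrix.single_apply, ite_and]

def ActsTriviallyOnHermitian (z : R) (g : Matrix n n A) : Prop :=
  ∀ X : Matrix n n A, Xᴴ = X → z • (g * X * gᴴ) = X

namespace ActsTriviallyOnHermitian

variable {z : R} {g : Matrix n n A}

theorem smul_mul_star_apply (h : ActsTriviallyOnHermitian z g) (i k l : n) :
    z • (g k i * star (g l i)) = single i i (1 : A) k l := by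
  have := congrFun₂ (h (single i i 1) (by simp)) k l
  rwa [Matrix.smul_apply, mul_single_mul_conjTranspose_apply, mul_one] at this

theorem smul_mul_star_self (h : ActsTriviallyOnHermitian z g) (i : n) :
    z • (g i i * star (g i i)) = 1 := by
  simpa using h.smul_mul_star_apply i i i

theorem apply_eq_zero_of_ne [∀ a : A, IsStarNormal a] (h : ActsTriviallyOnHermitian z g)
    {i k : n} (hki : k ≠ i) : g k i = 0 := by
  have hzero : z • (g k i * star (g i i)) = 0 := by
    simpa [single_apply, hki.symm] using h.smul_mul_star_apply i k i
  rw [← smul_mul_star_mul_cancel (h.smul_mul_star_self i) (g k i), hzero, zero_mul]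

theorem smul_mul_mul_star [∀ a : A, IsStarNormal a] (h : ActsTriviallyOnHermitian z g)
    {i j : n} (hij : i ≠ j) (q : A) : z • (g i i * q * star (g j j)) = q := by
  have hX : (single i j q + single j i (star q))ᴴ = single i j q + single j i (star q) := by
    simp [add_comm]
  have := congrFun₂ (h _ hX) i j
  simpa [Matrix.mul_add, Matrix.add_mul, mul_single_mul_conjTranspose_apply,
    single_apply, hij, h.apply_eq_zero_of_ne hij] using this

theorem apply_self_eq [∀ a : A, IsStarNormal a] (h : ActsTriviallyOnHermitian z g)
    (i j : n) : g j j = g i i := by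
  obtain rfl | hij := eq_or_ne i j
  · rfl
  have hone : z • (g i i * star (g j j)) = 1 := by simpa using h.smul_mul_mul_star hij 1
  rw [← smul_mul_star_mul_cancel (h.smul_mul_star_self j) (g i i), hone, one_mul]

theorem eq_scalar [∀ a : A, IsStarNormal a] (h : ActsTriviallyOnHermitian z g) (i : n) :
    g = scalar n (g i i) := by
  ext k l
  obtain rfl | hkl := eq_or_ne k l
  · simp [h.apply_self_eq i k]
  · simp [h.apply_eq_zero_of_ne hkl, hkl]

theorem mem_center [Nontrivial n] [∀ a : A, IsStarNormal a] (h : ActsTriviallyOnHermitian z g)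
    (i : n) : g i i ∈ Set.center A := by
  obtain ⟨j, hji⟩ := exists_ne i
  refine Semigroup.mem_center_iff.mpr fun q => ?_
  have hq : z • (g i i * q * star (g i i)) = q := by
    simpa [h.apply_self_eq i j] using h.smul_mul_mul_star hji.symm q
  rw [← smul_mul_star_mul_cancel (h.smul_mul_star_self i) (g i i * q), hq]

theorem _root_.actsTriviallyOnHermitian_iff [Nontrivial n] [∀ a : A, IsStarNormal a] :
    ActsTriviallyOnHermitian z g ↔
      ∃ a ∈ Set.center A, z • (a * star a) = 1 ∧ g = scalar n a := by
  constructor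
  · intro h
    obtain ⟨i⟩ : Nonempty n := inferInstance
    exact ⟨g i i, h.mem_center i, h.smul_mul_star_self i, h.eq_scalar i⟩
  · rintro ⟨a, ha, hz, rfl⟩ X -
    ext k l
    have hcomm : a * X k l = X k l * a := (Semigroup.mem_center_iff.mp ha (X k l)).symm
    rw [scalar_apply, diagonal_conjTranspose, Matrix.smul_apply, mul_diagonal, diagonal_mul,
      hcomm, mul_assoc, Pi.star_apply, ← mul_smul_comm, hz, mul_one]

end ActsTriviallyOnHermitian

end StarAlgebra

namespace QuaternionAlgebra

theorem center_eq_range_coe {R : Type*} [CommRing R] [NoZeroDivisors R] {c₁ c₂ : R}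
    (h2 : (2 : R) ≠ 0) (hc₁ : c₁ ≠ 0) :
    Set.center ℍ[R,c₁,c₂] = Set.range ((↑) : R → ℍ[R,c₁,c₂]) := by
  apply Set.Subset.antisymm
  · intro a ha
    have hi := congrArg (fun x => (x.imJ, x.imK)) (Semigroup.mem_center_iff.mp ha ⟨0, 1, 0, 0⟩)
    have hj := congrArg imK (Semigroup.mem_center_iff.mp ha ⟨0, 0, 1, 0⟩)
    simp only [imJ_mul, imK_mul, Prod.mk.injEq] at hi hj
    have hI : a.imI = 0 := (mul_eq_zero.mp (by linear_combination -hj)).resolve_left h2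
    have hJ : a.imJ = 0 := (mul_eq_zero.mp (by linear_combination hi.2)).resolve_left h2
    have hK : a.imK = 0 :=
      (mul_eq_zero.mp (by linear_combination hi.1)).resolve_left (mul_ne_zero h2 hc₁)
    exact ⟨a.re, by ext <;> simp [hI, hJ, hK]⟩
  · rintro _ ⟨r, rfl⟩
    exact Semigroup.mem_center_iff.mpr fun q => (coe_commutes r q).symm

theorem scalar_coe {R : Type*} [CommRing R] {c₁ c₂ c₃ : R} (n : Type*) [Fintype n]
    [DecidableEq n] (r : R) :
    scalar n (r : ℍ[R,c₁,c₂,c₃]) = r • (1 : Matrix n n ℍ[R,c₁,c₂,c₃]) := by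
  rw [← coe_algebraMap, ← Algebra.algebraMap_eq_smul_one]
  rfl

end QuaternionAlgebra

theorem stmt_6_general {F : Type*} [Field F] (h2 : (2 : F) ≠ 0)
    (c₁ c₂ : F) (hc₁ : c₁ ≠ 0)
    (g : Matrix (Fin 2) (Fin 2) ℍ[F, c₁, c₂]) (z : F) :
    (∀ X : Matrix (Fin 2) (Fin 2) ℍ[F, c₁, c₂], Xᴴ = X → z • (g * X * gᴴ) = X) ↔
    ∃ t : Fˣ, g = (t : F) • (1 : Matrix (Fin 2) (Fin 2) ℍ[F, c₁, c₂]) ∧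
      z = ((t : F) ^ 2)⁻¹ := by
  have hnorm (r : F) :
      z • ((r : ℍ[F, c₁, c₂]) * star (r : ℍ[F, c₁, c₂])) = 1 ↔ z * r ^ 2 = 1 := by
    rw [QuaternionAlgebra.star_coe, ← QuaternionAlgebra.coe_mul, QuaternionAlgebra.smul_coe,
      ← QuaternionAlgebra.coe_one, QuaternionAlgebra.coe_injective.eq_iff, sq]
  change ActsTriviallyOnHermitian z g ↔ _
  rw [actsTriviallyOnHermitian_iff, QuaternionAlgebra.center_eq_range_coe h2 hc₁]
  constructor
  · rintro ⟨_, ⟨r, rfl⟩, hz, rfl⟩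
    have hzr : z * r ^ 2 = 1 := (hnorm r).mp hz
    have hr : r ≠ 0 := fun hr => by simp [hr] at hzr
    exact ⟨Units.mk0 r hr, QuaternionAlgebra.scalar_coe _ r, eq_inv_of_mul_eq_one_left hzr⟩
  · rintro ⟨t, rfl, rfl⟩
    refine ⟨t, Set.mem_range_self _, (hnorm t).mpr (inv_mul_cancel₀ (by simp)),
      (QuaternionAlgebra.scalar_coe _ _).symm⟩

/-- `(g, z)` acts trivially on all Hermitian `2×2` matrices over a quaternion
algebra via `X ↦ z·g·X·gᴴ` iff `g = t·1` is scalar and `z = t⁻²`. -/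
theorem stmt_6 {F : Type*} [Field F] (h2 : (2 : F) ≠ 0)
    (c₁ c₂ : F) (hc₁ : c₁ ≠ 0) (hc₂ : c₂ ≠ 0)
    (g : Matrix (Fin 2) (Fin 2) ℍ[F, c₁, c₂]) (z : F) :
    (∀ X : Matrix (Fin 2) (Fin 2) ℍ[F, c₁, c₂], Xᴴ = X → z • (g * X * gᴴ) = X) ↔
    ∃ t : Fˣ, g = (t : F) • (1 : Matrix (Fin 2) (Fin 2) ℍ[F, c₁, c₂]) ∧
      z = ((t : F) ^ 2)⁻¹ :=
  stmt_6_general h2 c₁ c₂ hc₁ g z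
end

section
/- Let k be an algebraically closed field, V₀ a 2-dimensional k-vector space, φ₀ : G → GL(V₀) an irreducible representation of a group G, and μ : G → kˣ a character with det(φ₀(g)) = μ(g) for all g ∈ G. Consider the representation φ = φ₀ ⊕ φ₀ of G on V = V₀ ⊕ V₀. Then the space of alternating bilinear forms B on V (B(v,v) = 0 for all v) satisfying B(φ(g)v, φ(g)w) = μ(g)·B(v,w) for all g, v, w has dimension exactly 3 over k. -/
/-!
A `μ`-equivariant bilinear form `β` on `V₀` is a multiple of the determinant form `ω`
(for which `det φ₀ = μ` gives equivariance): writing `β v w = ω (T v) w`, the equivariance of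
both forms makes `T` commute with `φ₀`, so `T` is a scalar by Schur's lemma. The four blocks of a
`μ`-equivariant alternating form on `V₀ × V₀` are therefore multiples of `ω`, and alternation
makes the two off-diagonal blocks determine each other, leaving three independent forms.
-/

section EquivariantForms

open Module LinearMap

variable {k V : Type*} [Field k] [AddCommGroup V] [Module k V]

section DetForm

noncomputable def detForm (b : Basis (Fin 2) k V) : V →ₗ[k] V →ₗ[k] k :=
  LinearMap.mk₂ k (fun v w => b.repr v 0 * b.repr w 1 - b.repr v 1 * b.repr w 0)
    (fun v v' w => by simp only [map_add, Finsupp.add_apply]; ring)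
    (fun c v w => by simp only [map_smul, Finsupp.smul_apply, smul_eq_mul]; ring)
    (fun v w w' => by simp only [map_add, Finsupp.add_apply]; ring)
    (fun c v w => by simp only [map_smul, Finsupp.smul_apply, smul_eq_mul]; ring)

variable (b : Basis (Fin 2) k V)

lemma detForm_apply (v w : V) :
    detForm b v w = b.repr v 0 * b.repr w 1 - b.repr v 1 * b.repr w 0 := rfl

lemma detForm_apply_eq_det (v w : V) : detForm b v w = b.det ![v, w] := by
  rw [Basis.det_apply, Matrix.det_fin_two, detForm_apply]
  simp [Basis.toMatrix_apply, mul_comm]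

lemma detForm_isAlt : (detForm b).IsAlt := fun v => by
  rw [detForm_apply]; ring

lemma detForm_apply_basis : detForm b (b 0) (b 1) = 1 := by
  simp [detForm_apply]

lemma detForm_ne_zero : detForm b ≠ 0 := fun h => by
  simpa [h] using detForm_apply_basis b

lemma detForm_apply_map (f : V →ₗ[k] V) (v w : V) :
    detForm b (f v) (f w) = LinearMap.det f * detForm b v w := by
  have hcomp : ![f v, f w] = f ∘ ![v, w] := by
    funext i; fin_cases i <;> rfl
  rw [detForm_apply_eq_det, detForm_apply_eq_det, hcomp, Basis.det_comp]

lemma detForm_nondegenerate : (detForm b).Nondegenerate := by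
  refine (detForm_isAlt b).isRefl.nondegenerate_iff_separatingLeft.mpr fun v hv => ?_
  have h0 : b.repr v 0 = 0 := by simpa [detForm_apply] using hv (b 1)
  have h1 : b.repr v 1 = 0 := by simpa [detForm_apply] using hv (b 0)
  rw [← b.repr.map_eq_zero_iff]
  ext i
  fin_cases i <;> assumption

end DetForm

section Equivariant

variable {G : Type*}

def IsEquivariantForm (ρ : G → V ≃ₗ[k] V) (μ : G → k) (β : V →ₗ[k] V →ₗ[k] k) : Prop :=
  ∀ g v w, β (ρ g v) (ρ g w) = μ g * β v w

lemma IsEquivariantForm.add {ρ : G → V ≃ₗ[k] V} {μ : G → k} {β β' : V →ₗ[k] V →ₗ[k] k}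
    (hβ : IsEquivariantForm ρ μ β) (hβ' : IsEquivariantForm ρ μ β') :
    IsEquivariantForm ρ μ (β + β') := fun g v w => by
  simp only [LinearMap.add_apply, hβ g, hβ' g, mul_add]

lemma IsEquivariantForm.compl₁₂ {W : Type*} [AddCommGroup W] [Module k W]
    {ρ : G → V ≃ₗ[k] V} {σ : G → W ≃ₗ[k] W} {μ : G → k} {β : W →ₗ[k] W →ₗ[k] k}
    (hβ : IsEquivariantForm σ μ β) {f f' : V →ₗ[k] W}
    (hf : ∀ g v, f (ρ g v) = σ g (f v)) (hf' : ∀ g v, f' (ρ g v) = σ g (f' v)) :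
    IsEquivariantForm ρ μ (β.compl₁₂ f f') := fun g v w => by
  simp only [compl₁₂_apply, hf, hf', hβ g]

lemma detForm_isEquivariantForm (b : Basis (Fin 2) k V) {ρ : G → V ≃ₗ[k] V} {μ : G → k}
    (hdet : ∀ g, LinearMap.det (ρ g : V →ₗ[k] V) = μ g) :
    IsEquivariantForm ρ μ (detForm b) := fun g v w => by
  rw [← hdet, ← detForm_apply_map]; rfl

lemma exists_eq_smul_one_of_forall_commute [IsAlgClosed k] [FiniteDimensional k V]
    [Nontrivial V] (ρ : G → V ≃ₗ[k] V)
    (hirr : ∀ W : Submodule k V, (∀ g, ∀ v ∈ W, ρ g v ∈ W) → W = ⊥ ∨ W = ⊤)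
    (T : Module.End k V) (hT : ∀ g v, T (ρ g v) = ρ g (T v)) : ∃ c : k, T = c • 1 := by
  obtain ⟨c, hc⟩ := Module.End.exists_eigenvalue T
  have hinv : ∀ g, ∀ v ∈ T.eigenspace c, ρ g v ∈ T.eigenspace c := fun g v hv => by
    rw [Module.End.mem_eigenspace_iff] at hv ⊢
    rw [hT, hv, map_smul]
  obtain h | h := hirr _ hinv
  · exact absurd h hc
  · exact ⟨c, LinearMap.ext fun v =>
      Module.End.mem_eigenspace_iff.mp (h ▸ Submodule.mem_top : v ∈ T.eigenspace c)⟩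

lemma exists_eq_smul_detForm [IsAlgClosed k] (b : Basis (Fin 2) k V)
    (ρ : G → V ≃ₗ[k] V)
    (hirr : ∀ W : Submodule k V, (∀ g, ∀ v ∈ W, ρ g v ∈ W) → W = ⊥ ∨ W = ⊤)
    {μ : G → k} (hdet : ∀ g, LinearMap.det (ρ g : V →ₗ[k] V) = μ g)
    {β : V →ₗ[k] V →ₗ[k] k} (hβ : IsEquivariantForm ρ μ β) :
    ∃ c : k, β = c • detForm b := by
  have : FiniteDimensional k V := b.finiteDimensional_of_finite
  have : Nontrivial V := ⟨⟨b 0, 0, b.ne_zero 0⟩⟩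
  let e := BilinForm.toDual (detForm b) (detForm_nondegenerate b)
  let T : Module.End k V := e.symm.toLinearMap ∘ₗ β
  have hT : ∀ v w, detForm b (T v) w = β v w := fun v w => by
    rw [← BilinForm.toDual_def (detForm_nondegenerate b)]
    simp [T, e]
  have hcomm : ∀ g v, T (ρ g v) = ρ g (T v) := fun g v => e.injective <| LinearMap.ext fun w => by
    obtain ⟨u, rfl⟩ := (ρ g).surjective w
    simp only [e, BilinForm.toDual_def]
    rw [hT, hβ, detForm_isEquivariantForm b hdet, hT]
  obtain ⟨c, hc⟩ := exists_eq_smul_one_of_forall_commute ρ hirr T hcomm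
  refine ⟨c, LinearMap.ext₂ fun v w => ?_⟩
  rw [← hT, hc]
  simp

end Equivariant

section Product

variable {G : Type*}

def equivariantAltForms (ρ : G → V ≃ₗ[k] V) (μ : G → k) :
    Submodule k (V →ₗ[k] V →ₗ[k] k) where
  carrier := {B | B.IsAlt ∧ IsEquivariantForm ρ μ B}
  add_mem' := fun ⟨hB, hBρ⟩ ⟨hB', hB'ρ⟩ => ⟨fun v => by simp [hB v, hB' v], hBρ.add hB'ρ⟩
  zero_mem' := ⟨fun _ => rfl, fun _ _ _ => by simp⟩
  smul_mem' := fun c B ⟨hB, hBρ⟩ =>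
    ⟨fun v => by simp [hB v], fun g v w => by
      simp only [LinearMap.smul_apply, hBρ g, smul_eq_mul]; ring⟩

def blockForms (ω : V →ₗ[k] V →ₗ[k] k) : Fin 3 → (V × V →ₗ[k] V × V →ₗ[k] k) :=
  ![ω.compl₁₂ (fst k V V) (fst k V V), ω.compl₁₂ (snd k V V) (snd k V V),
    ω.compl₁₂ (fst k V V) (snd k V V) + ω.compl₁₂ (snd k V V) (fst k V V)]

lemma linearIndependent_blockForms {ω : V →ₗ[k] V →ₗ[k] k} (hω : ω ≠ 0) :
    LinearIndependent k (blockForms ω) := by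
  obtain ⟨x, y, hxy⟩ : ∃ x y, ω x y ≠ 0 := by
    by_contra! h
    exact hω (LinearMap.ext₂ h)
  refine (Fintype.linearIndependent_iff (v := blockForms ω)).mpr fun c hc => ?_
  have heval : ∀ p q : V × V,
      c 0 * ω p.1 q.1 + c 1 * ω p.2 q.2 + c 2 * (ω p.1 q.2 + ω p.2 q.1) = 0 := fun p q => by
    have := LinearMap.congr_fun₂ hc p q
    rw [Fin.sum_univ_three] at this
    simpa [blockForms, mul_add] using this
  have h₀ := heval (x, 0) (y, 0)
  have h₁ := heval (0, x) (0, y)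
  have h₂ := heval (x, 0) (0, y)
  simp only [map_zero, LinearMap.zero_apply, mul_zero, add_zero, zero_add,
    mul_eq_zero, hxy, or_false] at h₀ h₁ h₂
  intro i
  fin_cases i <;> assumption

lemma equivariantAltForms_prodCongr_eq_span {ρ : G → V ≃ₗ[k] V} {μ : G → k}
    {ω : V →ₗ[k] V →ₗ[k] k} (hω_alt : ω.IsAlt) (hωρ : IsEquivariantForm ρ μ ω)
    (hω : ∀ β, IsEquivariantForm ρ μ β → ∃ c : k, β = c • ω) :
    equivariantAltForms (fun g => (ρ g).prodCongr (ρ g)) μ =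
      Submodule.span k (Set.range (blockForms ω)) := by
  apply le_antisymm
  · rintro B ⟨hB, hBρ⟩
    obtain ⟨c₁, h₁⟩ := hω _ (hBρ.compl₁₂ (f := inl k V V) (f' := inl k V V)
      (fun _ _ => by simp) (fun _ _ => by simp))
    obtain ⟨c₂, h₂⟩ := hω _ (hBρ.compl₁₂ (f := inr k V V) (f' := inr k V V)
      (fun _ _ => by simp) (fun _ _ => by simp))
    obtain ⟨c₃, h₃⟩ := hω _ (hBρ.compl₁₂ (f := inr k V V) (f' := inl k V V)
      (fun _ _ => by simp) (fun _ _ => by simp))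
    refine (Submodule.mem_span_range_iff_exists_fun k).mpr ⟨![c₁, c₂, c₃], ?_⟩
    refine LinearMap.ext₂ fun ⟨x₁, x₂⟩ ⟨y₁, y₂⟩ => ?_
    have hsplit : B (x₁, x₂) (y₁, y₂) = B (inl k V V x₁) (inl k V V y₁)
        + B (inl k V V x₁) (inr k V V y₂) + B (inr k V V x₂) (inl k V V y₁)
        + B (inr k V V x₂) (inr k V V y₂) := by
      have hx : ((x₁, x₂) : V × V) = inl k V V x₁ + inr k V V x₂ := by simp
      have hy : ((y₁, y₂) : V × V) = inl k V V y₁ + inr k V V y₂ := by simp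
      rw [hx, hy]
      simp only [map_add, LinearMap.add_apply]
      ring
    have e₁ := LinearMap.congr_fun₂ h₁ x₁ y₁
    have e₂ := LinearMap.congr_fun₂ h₂ x₂ y₂
    have e₃ := LinearMap.congr_fun₂ h₃ x₂ y₁
    have e₄ := LinearMap.congr_fun₂ h₃ y₂ x₁
    simp only [compl₁₂_apply, LinearMap.smul_apply, smul_eq_mul] at e₁ e₂ e₃ e₄
    -- the `(inl, inr)` block is recovered from the `(inr, inl)` block by alternation
    rw [hsplit, ← hB.neg (inr k V V y₂), e₁, e₂, e₃, e₄, ← hω_alt.neg x₁ y₂]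
    simp only [blockForms, Fin.sum_univ_three, Matrix.cons_val_zero, Matrix.cons_val_one,
      Matrix.cons_val, LinearMap.add_apply, LinearMap.smul_apply, compl₁₂_apply, fst_apply,
      snd_apply, smul_eq_mul]
    ring
  · rw [Submodule.span_le]
    rintro _ ⟨i, rfl⟩
    fin_cases i
    · exact ⟨fun p => hω_alt p.1, hωρ.compl₁₂ (fun _ _ => rfl) (fun _ _ => rfl)⟩
    · exact ⟨fun p => hω_alt p.2, hωρ.compl₁₂ (fun _ _ => rfl) (fun _ _ => rfl)⟩
    · refine ⟨fun p => ?_, (hωρ.compl₁₂ (fun _ _ => rfl) (fun _ _ => rfl)).add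
        (hωρ.compl₁₂ (fun _ _ => rfl) (fun _ _ => rfl))⟩
      simp [blockForms, ← hω_alt.neg p.1 p.2]

lemma finrank_equivariantAltForms_prodCongr {ρ : G → V ≃ₗ[k] V} {μ : G → k}
    {ω : V →ₗ[k] V →ₗ[k] k} (hω_alt : ω.IsAlt) (hωρ : IsEquivariantForm ρ μ ω)
    (hω : ∀ β, IsEquivariantForm ρ μ β → ∃ c : k, β = c • ω) (hω₀ : ω ≠ 0) :
    finrank k (equivariantAltForms (fun g => (ρ g).prodCongr (ρ g)) μ) = 3 := by
  rw [equivariantAltForms_prodCongr_eq_span hω_alt hωρ hω,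
    finrank_span_eq_card (linearIndependent_blockForms hω₀), Fintype.card_fin]

end Product

end EquivariantForms

/-- For `φ = φ₀ ⊕ φ₀` with `φ₀` irreducible `2`-dimensional and `det φ₀ = μ`,
the space of `μ`-equivariant alternating bilinear forms has dimension `3`. -/
theorem stmt_10 {k G V₀ : Type*} [Field k] [IsAlgClosed k] [AddCommGroup V₀]
    [Module k V₀] [FiniteDimensional k V₀] [Group G]
    (hdim : Module.finrank k V₀ = 2)
    (φ₀ : G →* (V₀ ≃ₗ[k] V₀))
    (hirr : ∀ W : Submodule k V₀, (∀ g : G, ∀ v ∈ W, φ₀ g v ∈ W) → W = ⊥ ∨ W = ⊤)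
    (μ : G →* kˣ)
    (hdet : ∀ g : G, LinearMap.det (φ₀ g : V₀ →ₗ[k] V₀) = (μ g : k)) :
    ∃ S : Submodule k (((V₀ × V₀) →ₗ[k] (V₀ × V₀) →ₗ[k] k)),
      (S : Set (((V₀ × V₀) →ₗ[k] (V₀ × V₀) →ₗ[k] k))) =
        {B | (∀ v, B v v = 0) ∧
          ∀ (g : G) (v w : V₀ × V₀),
            B (φ₀ g v.1, φ₀ g v.2) (φ₀ g w.1, φ₀ g w.2) = (μ g : k) * B v w} ∧
      Module.finrank k S = 3 := by
  let b := Module.finBasisOfFinrankEq k V₀ hdim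
  refine ⟨equivariantAltForms (fun g => (φ₀ g).prodCongr (φ₀ g)) (fun g => (μ g : k)), rfl, ?_⟩
  exact finrank_equivariantAltForms_prodCongr (detForm_isAlt b) (detForm_isEquivariantForm b hdet)
    (fun _ hβ => exists_eq_smul_detForm b φ₀ hirr hdet hβ) (detForm_ne_zero b)
end

section
/- Let k be an algebraically closed field, φ₁ : G → GL(V₁) an irreducible 2-dimensional representation of a group G, and μ : G → kˣ a character such that det∘φ₁ ≠ μ (i.e. det(φ₁(g)) ≠ μ(g) for some g). Let φ₂ : G → GL(V₂) be a 2-dimensional representation for which there exists a nondegenerate bilinear pairing P : V₁ × V₂ → k with P(φ₁(g)v, φ₂(g)w) = μ(g)·P(v,w) for all g, v, w (so φ₂ ≅ φ₁^∨ ⊗ μ). Consider the representation φ = φ₁ ⊕ φ₂ on V = V₁ ⊕ V₂. Then the space of alternating bilinear forms B on V satisfying B(φ(g)v, φ(g)w) = μ(g)·B(v,w) for all g, v, w has dimension exactly 1 over k. -/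
/-!
On a 2-dimensional space every alternating form satisfies `B (f x) (f y) = det f * B x y`, so a
nonzero `μ`-equivariant alternating form forces `det (φ g) = μ g` for all `g`. Hence the `V₁ × V₁`
block of an equivariant alternating form on `V₁ × V₂` vanishes, and so does the `V₂ × V₂` block,
since the pairing gives `det φ₁ * det φ₂ = μ ^ 2`. The mixed block is an equivariant pairing, hence
a multiple of `P` by Schur's lemma, so every such form is a multiple of
`(x, y) ↦ P x.1 y.2 - P y.1 x.2`.
-/

namespace LinearMap

section Alt

variable {R M : Type*} [CommRing R] [AddCommGroup M] [Module R M] {B : M →ₗ[R] M →ₗ[R] R}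

theorem IsAlt.eq_mul_det (hB : B.IsAlt) (e : Module.Basis (Fin 2) R M) (x y : M) :
    B x y = B (e 0) (e 1) * e.det ![x, y] := by
  have hsum (z : M) : z = e.repr z 0 • e 0 + e.repr z 1 • e 1 :=
    (e.sum_repr z).symm.trans (Fin.sum_univ_two _)
  have h10 : B (e 1) (e 0) = -B (e 0) (e 1) := (hB.neg _ _).symm
  rw [e.det_apply, Matrix.det_fin_two]
  conv_lhs => rw [hsum x, hsum y]
  simp only [map_add, map_smul, add_apply, smul_apply, smul_eq_mul, hB.self_eq_zero, h10,
    Module.Basis.toMatrix_apply, Matrix.cons_val_zero, Matrix.cons_val_one]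
  ring

theorem IsAlt.map_map_eq_det_mul [Nontrivial R] [Module.Free R M] [Module.Finite R M]
    (hB : B.IsAlt) (hM : Module.finrank R M = 2) (f : M →ₗ[R] M) (x y : M) :
    B (f x) (f y) = LinearMap.det f * B x y := by
  let e := Module.finBasisOfFinrankEq R M hM
  have hcomp : ![f x, f y] = f ∘ ![x, y] := by
    ext i
    fin_cases i <;> rfl
  rw [hB.eq_mul_det e, hB.eq_mul_det e x, hcomp, e.det_comp]
  ring

theorem IsAlt.eq_zero_of_map_map_eq_mul [IsDomain R] [Module.Free R M] [Module.Finite R M]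
    (hB : B.IsAlt) (hM : Module.finrank R M = 2) {f : M →ₗ[R] M} {c : R}
    (hf : ∀ x y, B (f x) (f y) = c * B x y) (hc : LinearMap.det f ≠ c) : B = 0 := by
  ext x y
  have h : (LinearMap.det f - c) * B x y = 0 := by
    rw [sub_mul, ← hB.map_map_eq_det_mul hM, hf, sub_self]
  exact (mul_eq_zero.mp h).resolve_left (sub_ne_zero.mpr hc)

end Alt

section Prod

variable {R M N : Type*} [CommRing R] [AddCommGroup M] [Module R M] [AddCommGroup N] [Module R N]

theorem IsAlt.apply_prod {B : (M × N) →ₗ[R] (M × N) →ₗ[R] R} (hB : B.IsAlt) (x y : M × N) :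
    B x y = B (x.1, 0) (y.1, 0) + B (0, x.2) (0, y.2) + B (x.1, 0) (0, y.2) -
      B (y.1, 0) (0, x.2) := by
  have hsplit (z : M × N) : z = (z.1, 0) + (0, z.2) := by simp
  rw [← hB.neg (0, x.2) (y.1, 0)]
  conv_lhs => rw [hsplit x, hsplit y]
  simp only [map_add, add_apply]
  ring

def altPairing (P : M →ₗ[R] N →ₗ[R] R) : (M × N) →ₗ[R] (M × N) →ₗ[R] R :=
  P.compl₁₂ (fst R M N) (snd R M N) - (P.compl₁₂ (fst R M N) (snd R M N)).flip

@[simp]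
theorem altPairing_apply (P : M →ₗ[R] N →ₗ[R] R) (x y : M × N) :
    P.altPairing x y = P x.1 y.2 - P y.1 x.2 := rfl

theorem altPairing_ne_zero {P : M →ₗ[R] N →ₗ[R] R} (hP : P ≠ 0) : P.altPairing ≠ 0 := by
  refine fun h => hP (ext fun v => ext fun w => ?_)
  simpa using congr($h (v, 0) (0, w))

end Prod

theorem det_mul_det_eq_pow_of_map_map_eq_mul {K M₁ M₂ : Type*} [Field K]
    [AddCommGroup M₁] [Module K M₁] [FiniteDimensional K M₁]
    [AddCommGroup M₂] [Module K M₂] [FiniteDimensional K M₂]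
    {P : M₁ →ₗ[K] M₂ →ₗ[K] K} (hP : P.SeparatingLeft)
    (hrank : Module.finrank K M₁ = Module.finrank K M₂) {f : M₁ →ₗ[K] M₁} {h : M₂ →ₗ[K] M₂}
    {c : K} (hfh : ∀ x y, P (f x) (h y) = c * P x y) :
    LinearMap.det f * LinearMap.det h = c ^ Module.finrank K M₁ := by
  let b₁ := Module.finBasis K M₁
  let b₂ := Module.finBasisOfFinrankEq K M₂ hrank.symm
  have hmat : (toMatrix b₁ b₁ f).transpose * toMatrix₂ b₁ b₂ P * toMatrix b₂ b₂ h =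
      c • toMatrix₂ b₁ b₂ P := by
    rw [← toMatrix₂_compl₁₂, ← map_smul]
    congr 1
    ext x y
    exact hfh x y
  have hdet : (toMatrix₂ b₁ b₂ P).det ≠ 0 :=
    Matrix.separatingLeft_iff_det_ne_zero.mp ((separatingLeft_toMatrix₂_iff b₁ b₂).mpr hP)
  have := congrArg Matrix.det hmat
  rw [Matrix.det_mul, Matrix.det_mul, Matrix.det_transpose, Matrix.det_smul, Fintype.card_fin,
    det_toMatrix, det_toMatrix] at this
  exact mul_right_cancel₀ hdet (by linear_combination this)

end LinearMap

section Representation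

variable {k G V₁ V₂ : Type*} [Field k] [Group G]
  [AddCommGroup V₁] [Module k V₁] [FiniteDimensional k V₁]
  [AddCommGroup V₂] [Module k V₂] [FiniteDimensional k V₂]
  {φ₁ : G →* (V₁ ≃ₗ[k] V₁)} {φ₂ : G →* (V₂ ≃ₗ[k] V₂)}

theorem exists_eq_smul_of_forall_commute_of_irreducible [IsAlgClosed k] [Nontrivial V₁]
    (hirr : ∀ W : Submodule k V₁, (∀ g : G, ∀ v ∈ W, φ₁ g v ∈ W) → W = ⊥ ∨ W = ⊤)
    {T : Module.End k V₁} (hT : ∀ g v, T (φ₁ g v) = φ₁ g (T v)) :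
    ∃ c : k, ∀ v, T v = c • v := by
  obtain ⟨c, hc⟩ := T.exists_eigenvalue
  have hinv : ∀ g : G, ∀ v ∈ T.eigenspace c, φ₁ g v ∈ T.eigenspace c := by
    intro g v hv
    rw [Module.End.mem_eigenspace_iff] at hv ⊢
    rw [hT, hv, map_smul]
  have htop : T.eigenspace c = ⊤ := (hirr _ hinv).resolve_left hc
  exact ⟨c, fun v => Module.End.mem_eigenspace_iff.mp (htop ▸ Submodule.mem_top)⟩

theorem exists_eq_smul_of_map_map_eq_mul [IsAlgClosed k] [Nontrivial V₁]
    (hrank : Module.finrank k V₁ = Module.finrank k V₂)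
    (hirr : ∀ W : Submodule k V₁, (∀ g : G, ∀ v ∈ W, φ₁ g v ∈ W) → W = ⊥ ∨ W = ⊤)
    {χ : G → k} {P Q : V₁ →ₗ[k] V₂ →ₗ[k] k} (hP : P.SeparatingLeft)
    (hPφ : ∀ g v w, P (φ₁ g v) (φ₂ g w) = χ g * P v w)
    (hQφ : ∀ g v w, Q (φ₁ g v) (φ₂ g w) = χ g * Q v w) :
    ∃ c : k, Q = c • P := by
  have hPinj : Function.Injective P := by
    rw [← LinearMap.ker_eq_bot, LinearMap.ker_eq_bot']
    exact fun v hv => hP v fun w => by rw [hv]; rfl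
  have hPbij : Function.Bijective P := ⟨hPinj,
    (LinearMap.injective_iff_surjective_of_finrank_eq_finrank
      (hrank.trans Subspace.dual_finrank_eq.symm)).mp hPinj⟩
  let e := LinearEquiv.ofBijective P hPbij
  let T : Module.End k V₁ := e.symm.toLinearMap ∘ₗ Q
  have hPT (v : V₁) : P (T v) = Q v := e.apply_symm_apply (Q v)
  have hT (g : G) (v : V₁) : T (φ₁ g v) = φ₁ g (T v) := by
    refine hPinj (LinearMap.ext fun w => ?_)
    obtain ⟨u, rfl⟩ := (φ₂ g).surjective w
    rw [hPT, hQφ, hPφ, hPT]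
  obtain ⟨c, hc⟩ := exists_eq_smul_of_forall_commute_of_irreducible hirr hT
  refine ⟨c, LinearMap.ext fun v => ?_⟩
  rw [← hPT, hc, map_smul, LinearMap.smul_apply]

variable {μ : G →* kˣ}

theorem exists_det_ne_of_map_map_eq_mul (hdim₁ : Module.finrank k V₁ = 2)
    (hdim₂ : Module.finrank k V₂ = 2) (hdet : ∃ g, LinearMap.det (φ₁ g : V₁ →ₗ[k] V₁) ≠ μ g)
    {P : V₁ →ₗ[k] V₂ →ₗ[k] k} (hP : P.SeparatingLeft)
    (hPφ : ∀ g v w, P (φ₁ g v) (φ₂ g w) = μ g * P v w) :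
    ∃ g, LinearMap.det (φ₂ g : V₂ →ₗ[k] V₂) ≠ μ g := by
  obtain ⟨g, hg⟩ := hdet
  refine ⟨g, fun h₂ => hg ?_⟩
  have := LinearMap.det_mul_det_eq_pow_of_map_map_eq_mul hP (hdim₁.trans hdim₂.symm) (hPφ g)
  rw [hdim₁, h₂, sq] at this
  exact mul_right_cancel₀ (μ g).ne_zero this

theorem exists_eq_smul_altPairing_of_isAlt [IsAlgClosed k] (hdim₁ : Module.finrank k V₁ = 2)
    (hdim₂ : Module.finrank k V₂ = 2)
    (hirr : ∀ W : Submodule k V₁, (∀ g : G, ∀ v ∈ W, φ₁ g v ∈ W) → W = ⊥ ∨ W = ⊤)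
    (hdet : ∃ g, LinearMap.det (φ₁ g : V₁ →ₗ[k] V₁) ≠ μ g)
    {P : V₁ →ₗ[k] V₂ →ₗ[k] k} (hP : P.SeparatingLeft)
    (hPφ : ∀ g v w, P (φ₁ g v) (φ₂ g w) = μ g * P v w)
    {B : (V₁ × V₂) →ₗ[k] (V₁ × V₂) →ₗ[k] k} (hB : B.IsAlt)
    (hBφ : ∀ g x y, B (φ₁ g x.1, φ₂ g x.2) (φ₁ g y.1, φ₂ g y.2) = μ g * B x y) :
    ∃ c : k, B = c • P.altPairing := by
  have : Nontrivial V₁ := Module.nontrivial_of_finrank_eq_succ hdim₁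
  have h₁₁ (v w : V₁) : B (v, 0) (w, 0) = 0 := by
    obtain ⟨g, hg⟩ := hdet
    have hzero : B.compl₁₂ (LinearMap.inl k V₁ V₂) (LinearMap.inl k V₁ V₂) = 0 :=
      LinearMap.IsAlt.eq_zero_of_map_map_eq_mul (fun v => hB _) hdim₁
        (fun v w => by simpa using hBφ g (v, 0) (w, 0)) hg
    simpa using congr($hzero v w)
  have h₂₂ (v w : V₂) : B (0, v) (0, w) = 0 := by
    obtain ⟨g, hg⟩ := exists_det_ne_of_map_map_eq_mul hdim₁ hdim₂ hdet hP hPφ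
    have hzero : B.compl₁₂ (LinearMap.inr k V₁ V₂) (LinearMap.inr k V₁ V₂) = 0 :=
      LinearMap.IsAlt.eq_zero_of_map_map_eq_mul (fun v => hB _) hdim₂
        (fun v w => by simpa using hBφ g (0, v) (0, w)) hg
    simpa using congr($hzero v w)
  obtain ⟨c, hc⟩ := exists_eq_smul_of_map_map_eq_mul (hdim₁.trans hdim₂.symm) hirr hP hPφ
    (Q := B.compl₁₂ (LinearMap.inl k V₁ V₂) (LinearMap.inr k V₁ V₂))
    (fun g v w => by simpa using hBφ g (v, 0) (0, w))
  have h₁₂ (v : V₁) (w : V₂) : B (v, 0) (0, w) = c * P v w := by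
    simpa using congr($hc v w)
  refine ⟨c, LinearMap.ext fun x => LinearMap.ext fun y => ?_⟩
  rw [hB.apply_prod, h₁₁, h₂₂, h₁₂, h₁₂, LinearMap.smul_apply, LinearMap.smul_apply,
    LinearMap.altPairing_apply, smul_eq_mul]
  ring

end Representation

theorem stmt_12_general {k G V₁ V₂ : Type*} [Field k] [IsAlgClosed k]
    [AddCommGroup V₁] [Module k V₁] [FiniteDimensional k V₁]
    [AddCommGroup V₂] [Module k V₂] [FiniteDimensional k V₂] [Group G]
    (hdim₁ : Module.finrank k V₁ = 2) (hdim₂ : Module.finrank k V₂ = 2)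
    (φ₁ : G →* (V₁ ≃ₗ[k] V₁)) (φ₂ : G →* (V₂ ≃ₗ[k] V₂))
    (hirr₁ : ∀ W : Submodule k V₁, (∀ g : G, ∀ v ∈ W, φ₁ g v ∈ W) → W = ⊥ ∨ W = ⊤)
    (μ : G →* kˣ)
    (hdet : ∃ g : G, LinearMap.det (φ₁ g : V₁ →ₗ[k] V₁) ≠ (μ g : k))
    (P : V₁ →ₗ[k] V₂ →ₗ[k] k)
    (hPleft : ∀ v : V₁, (∀ w : V₂, P v w = 0) → v = 0)
    (hPequiv : ∀ (g : G) (v : V₁) (w : V₂), P (φ₁ g v) (φ₂ g w) = (μ g : k) * P v w) :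
    ∃ S : Submodule k (((V₁ × V₂) →ₗ[k] (V₁ × V₂) →ₗ[k] k)),
      (S : Set (((V₁ × V₂) →ₗ[k] (V₁ × V₂) →ₗ[k] k))) =
        {B | (∀ v, B v v = 0) ∧
          ∀ (g : G) (v w : V₁ × V₂),
            B (φ₁ g v.1, φ₂ g v.2) (φ₁ g w.1, φ₂ g w.2) = (μ g : k) * B v w} ∧
      Module.finrank k S = 1 := by
  have : Nontrivial V₁ := Module.nontrivial_of_finrank_eq_succ hdim₁
  have hP : P ≠ 0 := fun h => by
    obtain ⟨v, hv⟩ := exists_ne (0 : V₁)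
    exact hv (hPleft v fun w => by simp [h])
  refine ⟨k ∙ P.altPairing, ?_,
    finrank_span_singleton (K := k) (v := P.altPairing) (LinearMap.altPairing_ne_zero hP)⟩
  ext B
  simp only [SetLike.mem_coe, Submodule.mem_span_singleton, Set.mem_ofPred_eq]
  constructor
  · rintro ⟨c, rfl⟩
    refine ⟨fun v => by simp, fun g v w => ?_⟩
    simp only [LinearMap.smul_apply, smul_eq_mul, LinearMap.altPairing_apply, hPequiv]
    ring
  · rintro ⟨hB, hBφ⟩
    exact (exists_eq_smul_altPairing_of_isAlt hdim₁ hdim₂ hirr₁ hdet hPleft hPequiv hB hBφ).imp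
      fun c hc => hc.symm

/-- For `φ = φ₁ ⊕ φ₂` with `φ₁` irreducible `2`-dimensional, `det φ₁ ≠ μ`, and
`φ₂ ≅ φ₁^∨ ⊗ μ` (via a nondegenerate `μ`-equivariant pairing), the space of
`μ`-equivariant alternating bilinear forms has dimension `1`. -/
theorem stmt_12 {k G V₁ V₂ : Type*} [Field k] [IsAlgClosed k]
    [AddCommGroup V₁] [Module k V₁] [FiniteDimensional k V₁]
    [AddCommGroup V₂] [Module k V₂] [FiniteDimensional k V₂] [Group G]
    (hdim₁ : Module.finrank k V₁ = 2) (hdim₂ : Module.finrank k V₂ = 2)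
    (φ₁ : G →* (V₁ ≃ₗ[k] V₁)) (φ₂ : G →* (V₂ ≃ₗ[k] V₂))
    (hirr₁ : ∀ W : Submodule k V₁, (∀ g : G, ∀ v ∈ W, φ₁ g v ∈ W) → W = ⊥ ∨ W = ⊤)
    (μ : G →* kˣ)
    (hdet : ∃ g : G, LinearMap.det (φ₁ g : V₁ →ₗ[k] V₁) ≠ (μ g : k))
    (P : V₁ →ₗ[k] V₂ →ₗ[k] k)
    (hPleft : ∀ v : V₁, (∀ w : V₂, P v w = 0) → v = 0)
    (hPright : ∀ w : V₂, (∀ v : V₁, P v w = 0) → w = 0)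
    (hPequiv : ∀ (g : G) (v : V₁) (w : V₂), P (φ₁ g v) (φ₂ g w) = (μ g : k) * P v w) :
    ∃ S : Submodule k (((V₁ × V₂) →ₗ[k] (V₁ × V₂) →ₗ[k] k)),
      (S : Set (((V₁ × V₂) →ₗ[k] (V₁ × V₂) →ₗ[k] k))) =
        {B | (∀ v, B v v = 0) ∧
          ∀ (g : G) (v w : V₁ × V₂),
            B (φ₁ g v.1, φ₂ g v.2) (φ₁ g w.1, φ₂ g w.2) = (μ g : k) * B v w} ∧
      Module.finrank k S = 1 :=
  stmt_12_general hdim₁ hdim₂ φ₁ φ₂ hirr₁ μ hdet P hPleft hPequiv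
end
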